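/- For all a, b, x ∈ ℝ, the series ∑_{n ∈ ℤ} J_n(a) · sin(n·b·x) converges (as a sum over ℤ) to sin(a·sin(b·x)), where J_n(a) := (1/(2π)) ∫_{-π}^{π} cos(a·sin θ − n·θ) dθ. -/

import Mathlib

/-- Bessel function of the first kind, via its integral representation. -/
noncomputable def besselJ (n : ℤ) (a : ℝ) : ℝ :=
  (1 / (2 * Real.pi)) * ∫ θ in (-Real.pi)..Real.pi, Real.cos (a * Real.sin θ - n * θ)

/-!
The function `θ ↦ exp (i a sin θ)` is smooth and `2π`-periodic, and its `n`-th Fourier coefficient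
on `[-π, π]` is `J_n(a)`, the sine part of the integrand being odd in `θ`. Integrating by parts
twice shows that these coefficients are `O(1 / n²)`, hence summable, so the Fourier series converges
to the function everywhere. The identity is its imaginary part at `θ = b x`.
-/

open Complex Real Function Set

theorem Function.Periodic.deriv {E : Type*} [NormedAddCommGroup E] [NormedSpace ℝ E]
    {f : ℝ → E} {T : ℝ} (hf : Periodic f T) : Periodic (deriv f) T := fun x => by
  rw [← deriv_comp_add_const, show (fun y => f (y + T)) = f from funext hf]

theorem Function.Odd.intervalIntegral_eq_zero {E : Type*} [NormedAddCommGroup E]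
    [NormedSpace ℝ E] {f : ℝ → E} (hf : f.Odd) (c : ℝ) : ∫ x in -c..c, f x = 0 := by
  have h := intervalIntegral.integral_comp_neg (a := -c) (b := c) f
  rw [neg_neg, funext hf, intervalIntegral.integral_neg] at h
  have h2 : (2 : ℝ) • ∫ x in -c..c, f x = 0 := by
    rw [two_smul]
    nth_rw 1 [← h]
    exact neg_add_cancel _
  exact (smul_eq_zero.mp h2).resolve_left two_ne_zero

theorem AddCircle.liftIoc_eq_lift {𝕜 B : Type*} [AddCommGroup 𝕜] [LinearOrder 𝕜]
    [IsOrderedAddMonoid 𝕜] [Archimedean 𝕜] {p : 𝕜} [Fact (0 < p)] (a : 𝕜) {f : 𝕜 → B}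
    (hf : Periodic f p) : AddCircle.liftIoc p a f = hf.lift :=
  AddCircle.Ioc_ext p a fun x hx => by rw [AddCircle.liftIoc_coe_apply hx, hf.lift_coe]

theorem fourier_coe_apply_eq_exp_mul_I {T : ℝ} (n : ℤ) (x : ℝ) :
    fourier n (x : AddCircle T) = cexp (↑(2 * π * n * x / T) * I) := by
  rw [fourier_coe_apply]
  push_cast
  ring_nf

section FourierCoeffOn

variable {a b : ℝ} (hab : a < b)

theorem norm_fourierCoeffOn_le {E : Type*} [NormedAddCommGroup E] [NormedSpace ℂ E]
    {f : ℝ → E} {C : ℝ} (hC : ∀ x ∈ Icc a b, ‖f x‖ ≤ C) (n : ℤ) :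
    ‖fourierCoeffOn hab f n‖ ≤ C := by
  have hba : 0 < b - a := sub_pos.mpr hab
  have hint : ‖∫ x in a..b, fourier (-n) (x : AddCircle (b - a)) • f x‖ ≤ C * |b - a| := by
    refine intervalIntegral.norm_integral_le_of_norm_le_const fun x hx => ?_
    rw [norm_smul, fourier_apply, Circle.norm_coe, one_mul]
    exact hC x (Ioc_subset_Icc_self (uIoc_of_le hab.le ▸ hx))
  rw [fourierCoeffOn_eq_integral, norm_smul, norm_of_nonneg (by positivity)]
  calc 1 / (b - a) * _ ≤ 1 / (b - a) * (C * |b - a|) := by gcongr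
    _ = C := by rw [abs_of_pos hba]; field_simp

theorem fourierCoeffOn_eq_mul_fourierCoeffOn_deriv {f : ℝ → ℂ} (hf : ContDiff ℝ 1 f)
    (hfab : f a = f b) {n : ℤ} (hn : n ≠ 0) :
    fourierCoeffOn hab f n = (b - a) / (2 * π * I * n) * fourierCoeffOn hab (deriv f) n := by
  rw [fourierCoeffOn_of_hasDerivAt hab hn (fun x _ => (hf.differentiable one_ne_zero x).hasDerivAt)
    ((hf.continuous_deriv le_rfl).intervalIntegrable a b), hfab, sub_self, mul_zero]
  have : (n : ℂ) ≠ 0 := Int.cast_ne_zero.mpr hn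
  have : (π : ℂ) ≠ 0 := ofReal_ne_zero.mpr pi_ne_zero
  field_simp
  ring

theorem summable_fourierCoeffOn_of_contDiff_two {f : ℝ → ℂ} (hf : ContDiff ℝ 2 f)
    (hper : Periodic f (b - a)) : Summable (fourierCoeffOn hab f) := by
  have hf' : ContDiff ℝ 1 (deriv f) := (contDiff_succ_iff_deriv.mp hf).2.2
  have hends {g : ℝ → ℂ} (hg : Periodic g (b - a)) : g a = g b := by
    simpa using (hg a).symm
  obtain ⟨C, hC⟩ := isCompact_Icc.exists_bound_of_continuousOn
    (hf'.continuous_deriv le_rfl).continuousOn (s := Icc a b)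
  have hdecay (n : ℤ) (hn : n ≠ 0) :
      ‖fourierCoeffOn hab f n‖ ≤ ((b - a) / (2 * π)) ^ 2 * C * (1 / (n : ℝ) ^ 2) := by
    rw [fourierCoeffOn_eq_mul_fourierCoeffOn_deriv hab (hf.of_le (by norm_num)) (hends hper) hn,
      fourierCoeffOn_eq_mul_fourierCoeffOn_deriv hab hf' (hends hper.deriv) hn, ← mul_assoc,
      norm_mul]
    have hnorm : ‖(b - a) / (2 * π * I * n) * ((b - a) / (2 * π * I * n))‖
        = ((b - a) / (2 * π)) ^ 2 * (1 / (n : ℝ) ^ 2) := by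
      simp only [← ofReal_sub, norm_mul, norm_div, norm_real, norm_I, norm_intCast,
        Complex.norm_ofNat, norm_of_nonneg pi_pos.le, norm_of_nonneg (sub_pos.mpr hab).le]
      field_simp
      rw [sq_abs]
    calc _ ≤ ((b - a) / (2 * π)) ^ 2 * (1 / (n : ℝ) ^ 2) * C := by
          rw [hnorm]; gcongr; exact norm_fourierCoeffOn_le hab hC n
      _ = _ := by ring
  refine .of_norm_bounded_eventually
    ((summable_one_div_int_pow.mpr one_lt_two).mul_left (((b - a) / (2 * π)) ^ 2 * C)) ?_
  filter_upwards [Filter.eventually_cofinite_ne 0] with n hn using hdecay n hn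

theorem hasSum_fourierCoeffOn_of_summable {f : ℝ → ℂ} (hc : Continuous f)
    (hper : Periodic f (b - a)) (hs : Summable (fourierCoeffOn hab f)) (x : ℝ) :
    HasSum (fun n => fourierCoeffOn hab f n * fourier n (x : AddCircle (b - a))) (f x) := by
  have : Fact (0 < b - a) := ⟨sub_pos.mpr hab⟩
  let F : C(AddCircle (b - a), ℂ) := ⟨hper.lift, continuous_coinduced_dom.mpr hc⟩
  have hcoeff : fourierCoeff F = fourierCoeffOn hab f := by
    ext n
    rw [fourierCoeffOn, AddCircle.liftIoc_eq_lift a hper]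
    rfl
  have h := has_pointwise_sum_fourier_series_of_summable (hcoeff ▸ hs) (x : AddCircle (b - a))
  rw [hcoeff] at h
  exact h

end FourierCoeffOn

theorem fourierCoeffOn_exp_mul_sin_eq_besselJ (a : ℝ) (n : ℤ) :
    fourierCoeffOn (neg_lt_self pi_pos) (fun θ => cexp (↑(a * Real.sin θ) * I)) n
      = besselJ n a := by
  set φ : ℝ → ℝ := fun θ => a * Real.sin θ - n * θ
  have hintegrand (θ : ℝ) : fourier (-n) (θ : AddCircle (π - -π)) • cexp (↑(a * Real.sin θ) * I)
      = ↑(Real.cos (φ θ)) + ↑(Real.sin (φ θ)) * I := by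
    rw [fourier_coe_apply_eq_exp_mul_I, smul_eq_mul, ← Complex.exp_add, ← add_mul, ← ofReal_add,
      ofReal_cos, ofReal_sin, ← exp_mul_I]
    congr 3
    field_simp
    push_cast
    ring
  have hodd : ∫ θ in -π..π, Real.sin (φ θ) = 0 :=
    Function.Odd.intervalIntegral_eq_zero (fun θ => by
      rw [show φ (-θ) = -φ θ by simp only [φ, Real.sin_neg]; ring, Real.sin_neg]) π
  rw [fourierCoeffOn_eq_integral, intervalIntegral.integral_congr (fun θ _ => hintegrand θ),
    intervalIntegral.integral_add (Continuous.intervalIntegrable (by fun_prop) _ _)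
      (Continuous.intervalIntegrable (by fun_prop) _ _), intervalIntegral.integral_mul_const,
    intervalIntegral.integral_ofReal, intervalIntegral.integral_ofReal, hodd, besselJ,
    real_smul]
  push_cast
  ring

/-- Imaginary part of the Jacobi–Anger identity:
`sin (a sin (b x)) = ∑_{n ∈ ℤ} J_n(a) sin (n b x)`. -/
theorem jacobi_anger_sin (a b x : ℝ) :
    HasSum (fun n : ℤ => besselJ n a * Real.sin (n * b * x))
      (Real.sin (a * Real.sin (b * x))) := by
  set f : ℝ → ℂ := fun θ => cexp (↑(a * Real.sin θ) * I)
  have hf : ContDiff ℝ 2 f :=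
    ((ofRealCLM.contDiff.comp (contDiff_const.mul contDiff_sin)).mul contDiff_const).cexp
  have hper : Periodic f (π - -π) := fun θ => by
    simp only [f, sub_neg_eq_add, ← two_mul, Real.sin_add_two_pi]
  have hab : -π < π := neg_lt_self pi_pos
  have h := hasSum_im <| hasSum_fourierCoeffOn_of_summable hab hf.continuous hper
    (summable_fourierCoeffOn_of_contDiff_two hab hf hper) (b * x)
  simp only [f, fourierCoeffOn_exp_mul_sin_eq_besselJ, fourier_coe_apply_eq_exp_mul_I,
    im_ofReal_mul, exp_ofReal_mul_I_im] at h
  convert h using 3 with n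
  rw [sub_neg_eq_add, ← two_mul]
  field_simp
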